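/- arXiv:2311.08797 — 2 statements merged into one kernel-verified Lean document; each statement's English description precedes it below -/
import Mathlib

section
/- If a finite abelian group G admits a tight pair, then every saturated transfer system ℛ on G is realized: there exists U ∈ 𝒰_G with Tr(U) = ℛ. -/
open scoped Classical

/-- The character group of `G`: monoid homomorphisms to `ℂˣ`. -/
abbrev CharGp (G : Type*) [Group G] := G →* ℂˣ

/-- Complex conjugation acting on characters: `χ ↦ χ̄`. -/
noncomputable def charConj {G : Type*} [Group G] (χ : CharGp G) : CharGp G :=
  (Units.map (starRingEnd ℂ).toMonoidHom).comp χ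

/-- Restriction of characters along an inclusion of subgroups: `R_K^H` on elements. -/
def resChar {G : Type*} [Group G] {K H : Subgroup G} (h : K ≤ H) (χ : CharGp H) : CharGp K :=
  χ.comp (Subgroup.inclusion h)

/-- Restriction of a character of `G` itself to a subgroup. -/
def resCharTop {G : Type*} [Group G] (K : Subgroup G) (χ : CharGp G) : CharGp K :=
  χ.comp K.subtype

/-- A transfer system on a finite group `G`: a partial order on subgroups refining
inclusion, closed under conjugation and under intersection-pullback. -/
structure TransferSystem (G : Type*) [Group G] where
  rel : Subgroup G → Subgroup G → Prop
  le_of_rel : ∀ {K H : Subgroup G}, rel K H → K ≤ H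
  refl : ∀ H : Subgroup G, rel H H
  trans : ∀ {K L H : Subgroup G}, rel K L → rel L H → rel K H
  conj : ∀ {K H : Subgroup G} (g : G), rel K H →
    rel (K.map (MulAut.conj g).toMonoidHom) (H.map (MulAut.conj g).toMonoidHom)
  inf_rel : ∀ {K H : Subgroup G} (L : Subgroup G), rel K H → L ≤ H → rel (K ⊓ L) L

/-- A transfer system is saturated if `(K,H) ∈ ℛ` and `K ≤ L ≤ H` imply `(L,H) ∈ ℛ`. -/
def TransferSystem.Saturated {G : Type*} [Group G] (R : TransferSystem G) : Prop :=
  ∀ ⦃K L H : Subgroup G⦄, R.rel K H → K ≤ L → L ≤ H → R.rel L H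

/-- A subgroup `H` is `ℛ`-cofibrant if there is no proper `K < H` with `(K,H) ∈ ℛ`. -/
def TransferSystem.Cofibrant {G : Type*} [Group G] (R : TransferSystem G)
    (H : Subgroup G) : Prop :=
  ¬ ∃ K : Subgroup G, K < H ∧ R.rel K H

/-- `𝒰_G`: subsets of `Ĝ` containing the trivial character and closed under conjugation. -/
def UnivSet (G : Type*) [Group G] : Set (Set (CharGp G)) :=
  {U | (1 : CharGp G) ∈ U ∧ ∀ χ ∈ U, charConj χ ∈ U}

/-- `Tr(U)`: the relation `{(K,H) : K ≤ H and I_K^H(R_K^G(U)) ⊆ R_H^G(U)}`. -/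
def TrRel {G : Type*} [Group G] (U : Set (CharGp G)) (K H : Subgroup G) : Prop :=
  ∃ h : K ≤ H, resChar h ⁻¹' (resCharTop K '' U) ⊆ resCharTop H '' U

/-- The sub-inductor axioms for a family `J_K^H : 𝒫(K̂) → 𝒫(Ĥ)`. -/
structure IsSubInductor {G : Type*} [CommGroup G]
    (J : ∀ K H : Subgroup G, K ≤ H → Set (CharGp K) → Set (CharGp H)) : Prop where
  conj_comm : ∀ {K H : Subgroup G} (h : K ≤ H) (U : Set (CharGp K)),
    J K H h (charConj '' U) = charConj '' J K H h U
  union_comm : ∀ {K H : Subgroup G} (h : K ≤ H) (s : Set (Set (CharGp K))),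
    J K H h (⋃₀ s) = ⋃ U ∈ s, J K H h U
  comp : ∀ {K L H : Subgroup G} (h1 : K ≤ L) (h2 : L ≤ H) (U : Set (CharGp K)),
    J L H h2 (J K L h1 U) = J K H (h1.trans h2) U
  res_cover : ∀ {K H : Subgroup G} (h : K ≤ H) (U : Set (CharGp K)),
    resChar h '' J K H h U = U
  res_le : ∀ {K L H : Subgroup G} (hK : K ≤ H) (hL : L ≤ H) (U : Set (CharGp L)),
    resChar hK '' J L H hL U ⊆
      J (K ⊓ L) K inf_le_left (resChar (inf_le_right : K ⊓ L ≤ L) '' U)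
  one_mem : ∀ {K H : Subgroup G} (h : K ≤ H), (1 : CharGp H) ∈ J K H h {1}

/-- The residue of a sub-inductor: `Res_J(H) = ⋃_{K < H} J_K^H(K̂)`. -/
def resJ {G : Type*} [CommGroup G]
    (J : ∀ K H : Subgroup G, K ≤ H → Set (CharGp K) → Set (CharGp H))
    (H : Subgroup G) : Set (CharGp H) :=
  ⋃ (K : Subgroup G) (h : K < H), J K H h.le Set.univ

/-- A diagram is `R`-stable if `R_K^H(D(H)) ⊆ D(K)` for all `K ≤ H`. -/
def RStable {G : Type*} [CommGroup G] (D : ∀ H : Subgroup G, Set (CharGp H)) : Prop :=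
  ∀ {K H : Subgroup G} (h : K ≤ H), resChar h '' D H ⊆ D K

/-- A tight pair: an `R`-stable conjugation-invariant diagram together with a
sub-inductor satisfying the two non-containment constraints. -/
structure IsTightPair {G : Type*} [CommGroup G]
    (D : ∀ H : Subgroup G, Set (CharGp H))
    (J : ∀ K H : Subgroup G, K ≤ H → Set (CharGp K) → Set (CharGp H)) : Prop where
  rstable : RStable D
  subind : IsSubInductor J
  conj_inv : ∀ H : Subgroup G, ∀ χ ∈ D H, charConj χ ∈ D H
  ind_not_le : ∀ {K H : Subgroup G} (h : K < H),
    ¬ (resChar h.le ⁻¹' D K ⊆ D H ∪ resJ J H)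
  not_res : ∀ H : Subgroup G, ¬ (D H ⊆ resJ J H)

/-!
Let `m(H)` be the least subgroup `K` with `(K, H) ∈ ℛ`; it exists because `ℛ` is closed
under pulling back along intersections, and for saturated `ℛ` we get
`(K, H) ∈ ℛ ↔ m(H) ≤ K ≤ H`. Build a diagram `A` by recursion on subgroups: if `m(H) = H`
put `A(H) = D(H) ∪ ⋃_{K < H} J_K^H(A(K))`, otherwise let `A(H)` be the preimage of `A(m(H))`.
The sub-inductor axioms make `A` stable under restriction and closed under `J`, so restriction
maps `A(H)` onto `A(K)`, and `A` is the diagram of restrictions of `U = A(G)`. Hence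
`(K, H) ∈ Tr(U)` iff every character of `H` restricting into `A(K)` lies in `A(H)`. This holds
when `m(H) ≤ K`, as `A(H)` is pulled back from `m(H)`. Otherwise `m(K) < m(H)`, and tightness
gives a character of `m(H)` outside `D ∪ Res_J ⊇ A(m(H))` that restricts into `D(m(K))`; any
extension of it to `H` violates the `Tr(U)` condition.
-/

attribute [local instance] WellFoundedLT.toWellFoundedRelation

section Restriction

variable {G : Type*} [Group G]

@[simp]
lemma resChar_self {H : Subgroup G} (h : H ≤ H) : resChar h = (id : CharGp H → CharGp H) := rfl

lemma resChar_resChar {K L H : Subgroup G} (hKL : K ≤ L) (hLH : L ≤ H) (χ : CharGp H) :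
    resChar hKL (resChar hLH χ) = resChar (hKL.trans hLH) χ := rfl

lemma resChar_charConj {K H : Subgroup G} (h : K ≤ H) (χ : CharGp H) :
    resChar h (charConj χ) = charConj (resChar h χ) := rfl

lemma resChar_resCharTop {K H : Subgroup G} (h : K ≤ H) (χ : CharGp G) :
    resChar h (resCharTop H χ) = resCharTop K χ := rfl

lemma resCharTop_charConj (K : Subgroup G) (χ : CharGp G) :
    resCharTop K (charConj χ) = charConj (resCharTop K χ) := rfl

lemma resCharTop_top_surjective : Function.Surjective (resCharTop (⊤ : Subgroup G)) :=
  fun ψ => ⟨ψ.comp Subgroup.topEquiv.symm.toMonoidHom, rfl⟩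

lemma image_resCharTop_preimage_resCharTop_top (S : Set (CharGp (⊤ : Subgroup G)))
    (K : Subgroup G) : resCharTop K '' (resCharTop ⊤ ⁻¹' S) = resChar le_top '' S := by
  conv_rhs => rw [← Set.image_preimage_eq S resCharTop_top_surjective, Set.image_image]
  simp only [resChar_resCharTop]

end Restriction

namespace IsSubInductor

variable {G : Type*} [CommGroup G]
  {J : ∀ K H : Subgroup G, K ≤ H → Set (CharGp K) → Set (CharGp H)}

lemma monotone (hJ : IsSubInductor J) {K H : Subgroup G} (h : K ≤ H) : Monotone (J K H h) := by
  intro U V hUV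
  have hunion := hJ.union_comm h {U, V}
  rw [Set.sUnion_pair, Set.biUnion_pair, Set.union_eq_self_of_subset_left hUV] at hunion
  exact hunion ▸ Set.subset_union_left

lemma self_apply (hJ : IsSubInductor J) {H : Subgroup G} (h : H ≤ H) (U : Set (CharGp H)) :
    J H H h U = U := by
  simpa only [resChar_self, Set.image_id] using hJ.res_cover h U

lemma resChar_surjective (hJ : IsSubInductor J) {K H : Subgroup G} (h : K ≤ H) :
    Function.Surjective (resChar h) := by
  intro ψ
  obtain ⟨χ, -, hχ⟩ : ψ ∈ resChar h '' J K H h {ψ} := (hJ.res_cover h {ψ}).symm ▸ rfl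
  exact ⟨χ, hχ⟩

end IsSubInductor

namespace TransferSystem

section MinSource

variable {G : Type*} [Group G] [Finite G] (R : TransferSystem G)

noncomputable def minSource (H : Subgroup G) : Subgroup G :=
  wellFounded_lt.min {K | R.rel K H} ⟨H, R.refl H⟩

lemma rel_minSource (H : Subgroup G) : R.rel (R.minSource H) H :=
  wellFounded_lt.min_mem {K | R.rel K H} ⟨H, R.refl H⟩

lemma minSource_le (H : Subgroup G) : R.minSource H ≤ H :=
  R.le_of_rel (R.rel_minSource H)

lemma minSource_lt {H : Subgroup G} (hH : R.minSource H ≠ H) : R.minSource H < H :=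
  (R.minSource_le H).lt_of_ne hH

lemma minSource_le_of_rel {K H : Subgroup G} (hKH : R.rel K H) : R.minSource H ≤ K := by
  have hinf : R.rel (R.minSource H ⊓ K) H :=
    R.trans (R.inf_rel K (R.rel_minSource H) (R.le_of_rel hKH)) hKH
  exact inf_eq_left.mp
    (eq_of_le_of_not_lt inf_le_left (wellFounded_lt.not_lt_min {L | R.rel L H} hinf))

lemma minSource_mono {K H : Subgroup G} (hKH : K ≤ H) : R.minSource K ≤ R.minSource H :=
  (R.minSource_le_of_rel (R.inf_rel K (R.rel_minSource H) hKH)).trans inf_le_left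

lemma minSource_minSource (H : Subgroup G) : R.minSource (R.minSource H) = R.minSource H :=
  (R.minSource_le _).antisymm
    (R.minSource_le_of_rel (R.trans (R.rel_minSource _) (R.rel_minSource H)))

lemma Saturated.rel_iff {R : TransferSystem G} (hR : R.Saturated) {K H : Subgroup G} :
    R.rel K H ↔ K ≤ H ∧ R.minSource H ≤ K :=
  ⟨fun hKH => ⟨R.le_of_rel hKH, R.minSource_le_of_rel hKH⟩,
    fun ⟨hKH, hK⟩ => hR (R.rel_minSource H) hK hKH⟩

end MinSource

section InducedDiagram

variable {G : Type*} [CommGroup G] [Finite G] (R : TransferSystem G)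
  (D : ∀ H : Subgroup G, Set (CharGp H))
  (J : ∀ K H : Subgroup G, K ≤ H → Set (CharGp K) → Set (CharGp H))

noncomputable def inducedDiagram (H : Subgroup G) : Set (CharGp H) :=
  if _ : R.minSource H = H then
    D H ∪ ⋃ (K : Subgroup G) (hK : K < H), J K H hK.le (inducedDiagram K)
  else
    resChar (R.minSource_le H) ⁻¹' inducedDiagram (R.minSource H)
termination_by H
decreasing_by
  · exact hK
  · exact R.minSource_lt ‹_›

variable {R D J}

lemma inducedDiagram_of_minSource_eq {H : Subgroup G} (hH : R.minSource H = H) :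
    R.inducedDiagram D J H =
      D H ∪ ⋃ (K : Subgroup G) (hK : K < H), J K H hK.le (R.inducedDiagram D J K) := by
  rw [inducedDiagram, dif_pos hH]

lemma inducedDiagram_of_minSource_ne {H : Subgroup G} (hH : R.minSource H ≠ H) :
    R.inducedDiagram D J H =
      resChar (R.minSource_le H) ⁻¹' R.inducedDiagram D J (R.minSource H) := by
  rw [inducedDiagram, dif_neg hH]

lemma preimage_minSource_subset_inducedDiagram (H : Subgroup G) :
    resChar (R.minSource_le H) ⁻¹' R.inducedDiagram D J (R.minSource H) ⊆
      R.inducedDiagram D J H := by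
  by_cases hH : R.minSource H = H
  · have hcast : ∀ (M : Subgroup G) (hM : M ≤ H), M = H →
        resChar hM ⁻¹' R.inducedDiagram D J M ⊆ R.inducedDiagram D J H := by
      rintro _ _ rfl
      simp only [resChar_self, Set.preimage_id, subset_rfl]
    exact hcast _ _ hH
  · rw [inducedDiagram_of_minSource_ne hH]

lemma inducedDiagram_subset_union_resJ (hJ : IsSubInductor J) {H : Subgroup G}
    (hH : R.minSource H = H) : R.inducedDiagram D J H ⊆ D H ∪ resJ J H := by
  rw [inducedDiagram_of_minSource_eq hH]
  refine Set.union_subset_union_right _ (Set.iUnion₂_subset fun K hK => ?_)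
  exact Set.subset_iUnion₂_of_subset K hK (hJ.monotone hK.le (Set.subset_univ _))

lemma subset_inducedDiagram (hD : RStable D) (H : Subgroup G) :
    D H ⊆ R.inducedDiagram D J H := by
  induction H using WellFoundedLT.induction with
  | _ H ih =>
  by_cases hH : R.minSource H = H
  · rw [inducedDiagram_of_minSource_eq hH]
    exact Set.subset_union_left
  · intro χ hχ
    exact preimage_minSource_subset_inducedDiagram H
      (ih _ (R.minSource_lt hH) (hD _ ⟨χ, hχ, rfl⟩))

lemma induct_subset_inducedDiagram_of_forall_lt (hJ : IsSubInductor J) {H : Subgroup G}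
    (ih : ∀ K < H, ∀ (L : Subgroup G) (hLK : L ≤ K),
      resChar hLK '' R.inducedDiagram D J K ⊆ R.inducedDiagram D J L ∧
        J L K hLK (R.inducedDiagram D J L) ⊆ R.inducedDiagram D J K)
    {K : Subgroup G} (hKH : K ≤ H) :
    J K H hKH (R.inducedDiagram D J K) ⊆ R.inducedDiagram D J H := by
  rcases hKH.lt_or_eq with hlt | rfl
  · by_cases hH : R.minSource H = H
    · rw [inducedDiagram_of_minSource_eq hH]
      refine Set.subset_union_of_subset_right ?_ _
      exact Set.subset_iUnion₂_of_subset K hlt subset_rfl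
    · intro χ hχ
      rw [inducedDiagram_of_minSource_ne hH]
      have hres := hJ.res_le (R.minSource_le H) hKH _ ⟨χ, hχ, rfl⟩
      exact (ih _ (R.minSource_lt hH) _ inf_le_left).2
        (hJ.monotone _ (ih K hlt _ inf_le_right).1 hres)
  · rw [hJ.self_apply]

lemma image_resChar_inducedDiagram_subset_of_forall_lt (hD : RStable D) (hJ : IsSubInductor J)
    {H : Subgroup G}
    (ih : ∀ K < H, ∀ (L : Subgroup G) (hLK : L ≤ K),
      resChar hLK '' R.inducedDiagram D J K ⊆ R.inducedDiagram D J L ∧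
        J L K hLK (R.inducedDiagram D J L) ⊆ R.inducedDiagram D J K)
    {K : Subgroup G} (hKH : K ≤ H) :
    resChar hKH '' R.inducedDiagram D J H ⊆ R.inducedDiagram D J K := by
  rcases hKH.lt_or_eq with hlt | rfl
  · by_cases hH : R.minSource H = H
    · rw [inducedDiagram_of_minSource_eq hH, Set.image_union, Set.image_iUnion₂]
      refine Set.union_subset ((hD hKH).trans (subset_inducedDiagram hD K))
        (Set.iUnion₂_subset fun L hL => ?_)
      exact (hJ.res_le hKH hL.le _).trans
        ((hJ.monotone _ (ih L hL _ inf_le_right).1).trans (ih K hlt _ inf_le_left).2)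
    · rintro _ ⟨χ, hχ, rfl⟩
      rw [inducedDiagram_of_minSource_ne hH] at hχ
      apply preimage_minSource_subset_inducedDiagram K
      have hres := (ih _ (R.minSource_lt hH) _ (R.minSource_mono hKH)).1 ⟨_, hχ, rfl⟩
      simpa only [Set.mem_preimage, resChar_resChar] using hres
  · simp only [resChar_self, Set.image_id, subset_rfl]

lemma image_resChar_subset_and_induct_subset (hD : RStable D) (hJ : IsSubInductor J)
    (H : Subgroup G) : ∀ (K : Subgroup G) (hKH : K ≤ H),
      resChar hKH '' R.inducedDiagram D J H ⊆ R.inducedDiagram D J K ∧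
        J K H hKH (R.inducedDiagram D J K) ⊆ R.inducedDiagram D J H := by
  induction H using WellFoundedLT.induction with
  | _ H ih =>
  exact fun K hKH => ⟨image_resChar_inducedDiagram_subset_of_forall_lt hD hJ ih hKH,
    induct_subset_inducedDiagram_of_forall_lt hJ ih hKH⟩

lemma rStable_inducedDiagram (hD : RStable D) (hJ : IsSubInductor J) :
    RStable (R.inducedDiagram D J) :=
  fun hKH => (image_resChar_subset_and_induct_subset hD hJ _ _ hKH).1

lemma induct_subset_inducedDiagram (hD : RStable D) (hJ : IsSubInductor J) {K H : Subgroup G}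
    (hKH : K ≤ H) : J K H hKH (R.inducedDiagram D J K) ⊆ R.inducedDiagram D J H :=
  (image_resChar_subset_and_induct_subset hD hJ H K hKH).2

lemma image_resChar_inducedDiagram (hD : RStable D) (hJ : IsSubInductor J) {K H : Subgroup G}
    (hKH : K ≤ H) : resChar hKH '' R.inducedDiagram D J H = R.inducedDiagram D J K := by
  refine (rStable_inducedDiagram hD hJ hKH).antisymm ?_
  conv_lhs => rw [← hJ.res_cover hKH (R.inducedDiagram D J K)]
  exact Set.image_mono (induct_subset_inducedDiagram hD hJ hKH)

lemma charConj_mem_inducedDiagram (hJ : IsSubInductor J)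
    (hD : ∀ H : Subgroup G, ∀ χ ∈ D H, charConj χ ∈ D H) (H : Subgroup G) :
    ∀ χ ∈ R.inducedDiagram D J H, charConj χ ∈ R.inducedDiagram D J H := by
  induction H using WellFoundedLT.induction with
  | _ H ih =>
  by_cases hH : R.minSource H = H
  · rw [inducedDiagram_of_minSource_eq hH]
    rintro χ (hχ | hχ)
    · exact Or.inl (hD H χ hχ)
    · obtain ⟨K, hK, hχ⟩ := Set.mem_iUnion₂.mp hχ
      have hconj : charConj χ ∈ J K H hK.le (charConj '' R.inducedDiagram D J K) :=
        hJ.conj_comm hK.le _ ▸ ⟨χ, hχ, rfl⟩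
      exact Or.inr (Set.mem_iUnion₂.mpr
        ⟨K, hK, hJ.monotone hK.le (Set.image_subset_iff.mpr (ih K hK)) hconj⟩)
  · rw [inducedDiagram_of_minSource_ne hH]
    intro χ hχ
    rw [Set.mem_preimage, resChar_charConj]
    exact ih _ (R.minSource_lt hH) _ hχ

lemma one_mem_inducedDiagram (hD : RStable D) (hJ : IsSubInductor J) (hD_bot : (D ⊥).Nonempty)
    (H : Subgroup G) : 1 ∈ R.inducedDiagram D J H := by
  have hbot : (1 : CharGp (⊥ : Subgroup G)) ∈ R.inducedDiagram D J ⊥ := by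
    obtain ⟨χ, hχ⟩ := hD_bot
    exact Subsingleton.elim χ 1 ▸ subset_inducedDiagram hD ⊥ hχ
  exact induct_subset_inducedDiagram hD hJ bot_le
    (hJ.monotone bot_le (Set.singleton_subset_iff.mpr hbot) (hJ.one_mem bot_le))

lemma preimage_subset_inducedDiagram_of_minSource_le (hD : RStable D) (hJ : IsSubInductor J)
    {K H : Subgroup G} (hKH : K ≤ H) (hK : R.minSource H ≤ K) :
    resChar hKH ⁻¹' R.inducedDiagram D J K ⊆ R.inducedDiagram D J H := by
  intro χ hχ
  apply preimage_minSource_subset_inducedDiagram H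
  rw [Set.mem_preimage, ← resChar_resChar hK hKH]
  exact rStable_inducedDiagram hD hJ hK ⟨_, hχ, rfl⟩

lemma minSource_le_of_preimage_subset (hDJ : IsTightPair D J) {K H : Subgroup G} (hKH : K ≤ H)
    (hsub : resChar hKH ⁻¹' R.inducedDiagram D J K ⊆ R.inducedDiagram D J H) :
    R.minSource H ≤ K := by
  by_contra hK
  have hlt : R.minSource K < R.minSource H :=
    (R.minSource_mono hKH).lt_of_ne fun he => hK (he ▸ R.minSource_le K)
  obtain ⟨σ, hσD, hσ⟩ := Set.not_subset.mp (hDJ.ind_not_le hlt)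
  have hσA : σ ∉ R.inducedDiagram D J (R.minSource H) := fun hσA =>
    hσ (inducedDiagram_subset_union_resJ hDJ.subind (R.minSource_minSource H) hσA)
  obtain ⟨χ, rfl⟩ := hDJ.subind.resChar_surjective (R.minSource_le H) σ
  have hχK : resChar hKH χ ∈ R.inducedDiagram D J K := by
    apply preimage_minSource_subset_inducedDiagram K
    rw [Set.mem_preimage, resChar_resChar, ← resChar_resChar hlt.le (R.minSource_le H)]
    exact subset_inducedDiagram hDJ.rstable _ hσD
  exact hσA (rStable_inducedDiagram hDJ.rstable hDJ.subind _ ⟨χ, hsub hχK, rfl⟩)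

lemma rel_iff_preimage_subset_inducedDiagram (hDJ : IsTightPair D J) (hR : R.Saturated)
    {K H : Subgroup G} : R.rel K H ↔
      ∃ hKH : K ≤ H, resChar hKH ⁻¹' R.inducedDiagram D J K ⊆ R.inducedDiagram D J H := by
  rw [hR.rel_iff]
  exact ⟨fun ⟨hKH, hK⟩ => ⟨hKH, preimage_subset_inducedDiagram_of_minSource_le
      hDJ.rstable hDJ.subind hKH hK⟩,
    fun ⟨hKH, hsub⟩ => ⟨hKH, minSource_le_of_preimage_subset hDJ hKH hsub⟩⟩

end InducedDiagram

end TransferSystem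

/-- **Corollary.** If a finite abelian group `G` admits a tight pair, then every
saturated transfer system on `G` is realized by some `U ∈ 𝒰_G`. -/
theorem tight_pair_realization (G : Type*) [CommGroup G] [Fintype G]
    (D : ∀ H : Subgroup G, Set (CharGp H))
    (J : ∀ K H : Subgroup G, K ≤ H → Set (CharGp K) → Set (CharGp H))
    (hDJ : IsTightPair D J)
    (R : TransferSystem G) (hR : R.Saturated) :
    ∃ U ∈ UnivSet G, ∀ K H : Subgroup G, R.rel K H ↔ TrRel U K H := by
  set A := R.inducedDiagram D J
  have hA : ∀ L : Subgroup G, resCharTop L '' (resCharTop ⊤ ⁻¹' A ⊤) = A L := fun L => by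
    rw [image_resCharTop_preimage_resCharTop_top,
      R.image_resChar_inducedDiagram hDJ.rstable hDJ.subind]
  refine ⟨resCharTop ⊤ ⁻¹' A ⊤, ⟨?_, fun χ hχ => ?_⟩, fun K H => ?_⟩
  · have hD_bot : (D ⊥).Nonempty :=
      (Set.nonempty_of_not_subset (hDJ.not_res ⊥)).mono Set.sdiff_subset
    exact R.one_mem_inducedDiagram hDJ.rstable hDJ.subind hD_bot ⊤
  · rw [Set.mem_preimage, resCharTop_charConj]
    exact R.charConj_mem_inducedDiagram hDJ.subind hDJ.conj_inv ⊤ _ hχ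
  · simp only [TrRel, hA]
    exact R.rel_iff_preimage_subset_inducedDiagram hDJ hR
end

section
/- Let G and G' be finite abelian groups with gcd(|G|,|G'|) = 1, and let J, J' be sub-inductors on G and G' respectively. Then J ⊗ J' is a sub-inductor on G × G', and for every subgroup H × H' ≤ G × G' its residue satisfies Res_{J⊗J'}(H × H') = (Res_J(H) ⊗ Ĥ') ∪ (Ĥ ⊗ Res_{J'}(H')), where for S ⊆ Ĥ and S' ⊆ Ĥ' we write S ⊗ S' = {χ ⊗ χ' : χ ∈ S, χ' ∈ S'}. -/
open scoped Classical

/-- The tensor (external product) of characters of subgroups: `χ ⊗ χ'` is the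
character of `H × H'` given by `(h,h') ↦ χ(h)·χ'(h')`. -/
def charTensor {G G' : Type*} [CommGroup G] [CommGroup G']
    {H : Subgroup G} {H' : Subgroup G'} (χ : CharGp H) (χ' : CharGp H') :
    CharGp (H.prod H') :=
  ((χ.comp (MonoidHom.fst H H')) * (χ'.comp (MonoidHom.snd H H'))).comp
    (Subgroup.prodEquiv H H').toMonoidHom

set_option linter.unusedSectionVars false

section
variable {G G' : Type*} [CommGroup G] [CommGroup G']

lemma charTensor_apply {H : Subgroup G} {H' : Subgroup G'} (χ : CharGp H) (χ' : CharGp H')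
    (p : H.prod H') (h1 : (p : G × G').1 ∈ H) (h2 : (p : G × G').2 ∈ H') :
    charTensor χ χ' p = χ ⟨(p : G × G').1, h1⟩ * χ' ⟨(p : G × G').2, h2⟩ := rfl

lemma charConj_charConj {H : Type*} [Group H] (χ : CharGp H) : charConj (charConj χ) = χ := by
  ext x
  simp [charConj]

lemma charConj_comp {A B : Type*} [Group A] [Group B] (χ : CharGp B) (f : A →* B) :
    charConj (χ.comp f) = (charConj χ).comp f := rfl

lemma resChar_rfl {K : Subgroup G} (h : K ≤ K) (χ : CharGp K) : resChar h χ = χ := by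
  ext x; rfl

lemma charTensor_comp_congr_apply {P : Subgroup (G × G')} {A : Subgroup G} {B : Subgroup G'}
    (hP : P = A.prod B) (τ : CharGp A) (τ' : CharGp B) (p : P)
    (h1 : (p : G × G').1 ∈ A) (h2 : (p : G × G').2 ∈ B) :
    ((charTensor τ τ').comp (MulEquiv.subgroupCongr hP).toMonoidHom) p
      = τ ⟨(p : G × G').1, h1⟩ * τ' ⟨(p : G × G').2, h2⟩ := by
  subst hP
  rfl
end

section Cop
variable {G G' : Type*} [CommGroup G] [CommGroup G'] [Fintype G] [Fintype G']
variable (hcop : Nat.Coprime (Nat.card G) (Nat.card G'))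

include hcop in
lemma mem_fst_one {P : Subgroup (G × G')} {g : G × G'} (hg : g ∈ P) : (g.1, (1 : G')) ∈ P := by
  rcases g with ⟨a, b⟩
  set c' : ℕ := Nat.card G' with hc'
  set d : ℕ := orderOf a with hd
  have hdvd : d ∣ Nat.card G := by
    rw [Nat.card_eq_fintype_card]; exact orderOf_dvd_card
  have hco : Nat.Coprime c' d := Nat.Coprime.coprime_dvd_right hdvd hcop.symm
  -- Bezout
  have hbez : (1 : ℤ) = c' * Nat.gcdA c' d + d * Nat.gcdB c' d := by
    have := Nat.gcd_eq_gcd_ab c' d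
    rw [hco] at this
    exact_mod_cast this
  set u : ℤ := Nat.gcdA c' d
  set v : ℤ := Nat.gcdB c' d
  have hz : ((a, b) : G × G') ^ ((c' : ℤ) * u) ∈ P := P.zpow_mem hg _
  have hb : b ^ ((c' : ℤ) * u) = 1 := by
    rw [zpow_mul]
    norm_cast
    rw [pow_card_eq_one', one_zpow]
  have ha : a ^ ((c' : ℤ) * u) = a := by
    have h1 : ((c' : ℤ) * u) = 1 - d * v := by linarith [hbez]
    rw [h1, zpow_sub, zpow_one, zpow_mul]
    norm_cast
    rw [pow_orderOf_eq_one, one_zpow, inv_one, mul_one]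
  have : ((a, b) : G × G') ^ ((c' : ℤ) * u) = (a, 1) := by
    rw [Prod.pow_def] at *
    exact Prod.ext ha hb
  rwa [this] at hz

include hcop in
lemma mem_snd_one {P : Subgroup (G × G')} {g : G × G'} (hg : g ∈ P) : ((1 : G), g.2) ∈ P := by
  have h1 := mem_fst_one hcop hg
  have : ((1 : G), g.2) = g * (g.1, (1:G'))⁻¹ := by
    ext <;> simp
  rw [this]
  exact P.mul_mem hg (P.inv_mem h1)

include hcop in
lemma exists_decomp (P : Subgroup (G × G')) : ∃ (A : Subgroup G) (B : Subgroup G'),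
    P = A.prod B := by
  refine ⟨P.map (MonoidHom.fst G G'), P.map (MonoidHom.snd G G'), le_antisymm ?_ ?_⟩
  · intro g hg
    exact ⟨⟨g, hg, rfl⟩, ⟨g, hg, rfl⟩⟩
  · rintro ⟨a, b⟩ ⟨⟨x, hx, hx1⟩, ⟨y, hy, hy1⟩⟩
    have h1 : (a, (1:G')) ∈ P := by
      have := mem_fst_one hcop hx
      simp only [MonoidHom.coe_fst] at hx1
      rwa [hx1] at this
    have h2 : ((1:G), b) ∈ P := by
      have := mem_snd_one hcop hy
      simp only [MonoidHom.coe_snd] at hy1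
      rwa [hy1] at this
    have : ((a, b) : G × G') = (a, 1) * (1, b) := by ext <;> simp
    rw [this]; exact P.mul_mem h1 h2
end Cop

section Sub
variable {G G' : Type*} [CommGroup G] [CommGroup G']

lemma map_fst_prod (A : Subgroup G) (B : Subgroup G') :
    (A.prod B).map (MonoidHom.fst G G') = A := by
  ext x
  constructor
  · rintro ⟨⟨a, b⟩, ⟨ha, hb⟩, rfl⟩; exact ha
  · intro hx; exact ⟨(x, 1), ⟨hx, B.one_mem⟩, rfl⟩

lemma map_snd_prod (A : Subgroup G) (B : Subgroup G') :
    (A.prod B).map (MonoidHom.snd G G') = B := by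
  ext x
  constructor
  · rintro ⟨⟨a, b⟩, ⟨ha, hb⟩, rfl⟩; exact hb
  · intro hx; exact ⟨(1, x), ⟨A.one_mem, hx⟩, rfl⟩

lemma prod_inj {A C : Subgroup G} {B D : Subgroup G'} (h : A.prod B = C.prod D) :
    A = C ∧ B = D := by
  constructor
  · rw [← map_fst_prod A B, h, map_fst_prod]
  · rw [← map_snd_prod A B, h, map_snd_prod]

lemma prod_le_prod_iff {A C : Subgroup G} {B D : Subgroup G'} :
    A.prod B ≤ C.prod D ↔ A ≤ C ∧ B ≤ D := by
  constructor
  · intro h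
    constructor
    · intro a ha
      exact (h (show ((a,1) : G × G') ∈ A.prod B from ⟨ha, B.one_mem⟩)).1
    · intro b hb
      exact (h (show ((1,b) : G × G') ∈ A.prod B from ⟨A.one_mem, hb⟩)).2
  · rintro ⟨h1, h2⟩
    exact Subgroup.prod_mono h1 h2

lemma prod_inf_prod (A C : Subgroup G) (B D : Subgroup G') :
    (A.prod B) ⊓ (C.prod D) = (A ⊓ C).prod (B ⊓ D) := by
  ext ⟨a, b⟩
  simp only [Subgroup.mem_inf, Subgroup.mem_prod]
  tauto

lemma prod_lt_prod_left {A C : Subgroup G} (B : Subgroup G') (h : A < C) :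
    A.prod B < C.prod B := by
  refine lt_of_le_of_ne (Subgroup.prod_mono h.le le_rfl) ?_
  intro he
  exact h.ne (prod_inj he).1

lemma prod_lt_prod_right (A : Subgroup G) {B D : Subgroup G'} (h : B < D) :
    A.prod B < A.prod D := by
  refine lt_of_le_of_ne (Subgroup.prod_mono le_rfl h.le) ?_
  intro he
  exact h.ne (prod_inj he).2
end Sub

section JL
variable {G : Type*} [CommGroup G]
variable {J : ∀ K H : Subgroup G, K ≤ H → Set (CharGp K) → Set (CharGp H)}
variable (hJ : IsSubInductor J)

include hJ

lemma J_eq_iUnion {K H : Subgroup G} (h : K ≤ H) (U : Set (CharGp K)) :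
    J K H h U = ⋃ τ ∈ U, J K H h {τ} := by
  have h1 : U = ⋃₀ ((fun τ => ({τ} : Set (CharGp K))) '' U) := by
    ext x; simp
  conv_lhs => rw [h1, hJ.union_comm]
  ext ξ
  simp

lemma J_mono {K H : Subgroup G} (h : K ≤ H) {U V : Set (CharGp K)} (hUV : U ⊆ V) :
    J K H h U ⊆ J K H h V := by
  rw [J_eq_iUnion hJ, J_eq_iUnion hJ (U := V)]
  exact Set.biUnion_subset_biUnion_left hUV

lemma J_mem_singleton {K H : Subgroup G} (h : K ≤ H) {U : Set (CharGp K)} {σ : CharGp H}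
    (hs : σ ∈ J K H h U) : ∃ τ ∈ U, σ ∈ J K H h {τ} := by
  rw [J_eq_iUnion hJ] at hs
  simpa using hs

lemma J_nonempty {K H : Subgroup G} (h : K ≤ H) (τ : CharGp K) :
    (J K H h {τ}).Nonempty := by
  have := hJ.res_cover h {τ}
  have h2 : τ ∈ resChar h '' J K H h {τ} := by rw [this]; rfl
  obtain ⟨σ, hσ, -⟩ := h2
  exact ⟨σ, hσ⟩

lemma J_res {K H : Subgroup G} (h : K ≤ H) {τ : CharGp K} {σ : CharGp H}
    (hs : σ ∈ J K H h {τ}) : resChar h σ = τ := by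
  have := hJ.res_cover h {τ}
  have h2 : resChar h σ ∈ resChar h '' J K H h {τ} := ⟨σ, hs, rfl⟩
  rwa [this] at h2

lemma J_self {K : Subgroup G} (h : K ≤ K) (U : Set (CharGp K)) : J K K h U = U := by
  have hc := hJ.res_cover h U
  ext x
  constructor
  · intro hx
    have : resChar h x ∈ resChar h '' J K K h U := ⟨x, hx, rfl⟩
    rwa [hc, resChar_rfl h x] at this
  · intro hx
    rw [← hc] at hx
    obtain ⟨y, hy, hyx⟩ := hx
    rw [resChar_rfl h y] at hyx
    exact hyx ▸ hy

lemma J_comp_mem {K L H : Subgroup G} (h1 : K ≤ L) (h2 : L ≤ H) {ρ : CharGp K}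
    {τ : CharGp L} {σ : CharGp H} (hτ : τ ∈ J K L h1 {ρ}) (hσ : σ ∈ J L H h2 {τ}) :
    σ ∈ J K H (h1.trans h2) {ρ} := by
  rw [← hJ.comp h1 h2]
  exact J_mono hJ h2 (Set.singleton_subset_iff.2 hτ) hσ

lemma J_comp_exists {K L H : Subgroup G} (h1 : K ≤ L) (h2 : L ≤ H) {ρ : CharGp K}
    {σ : CharGp H} (hσ : σ ∈ J K H (h1.trans h2) {ρ}) :
    ∃ τ ∈ J K L h1 {ρ}, σ ∈ J L H h2 {τ} := by
  rw [← hJ.comp h1 h2] at hσ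
  exact J_mem_singleton hJ h2 hσ

lemma J_conj_mem {K H : Subgroup G} (h : K ≤ H) {τ : CharGp K} {σ : CharGp H}
    (hσ : σ ∈ J K H h {τ}) : charConj σ ∈ J K H h {charConj τ} := by
  have h1 : ({charConj τ} : Set (CharGp K)) = charConj '' {τ} := by simp
  rw [h1, hJ.conj_comm]
  exact ⟨σ, hσ, rfl⟩
end JL


section TChar
variable {G G' : Type*} [CommGroup G] [CommGroup G']

/-- Transported tensor character. -/
def tchar {P : Subgroup (G × G')} {A : Subgroup G} {B : Subgroup G'}
    (hP : P = A.prod B) (τ : CharGp A) (τ' : CharGp B) : CharGp P :=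
  (charTensor τ τ').comp (MulEquiv.subgroupCongr hP).toMonoidHom

lemma charConj_apply {H : Type*} [Group H] (χ : CharGp H) (x : H) :
    charConj χ x = Units.map (starRingEnd ℂ).toMonoidHom (χ x) := rfl

lemma tchar_apply {P : Subgroup (G × G')} {A : Subgroup G} {B : Subgroup G'}
    (hP : P = A.prod B) (τ : CharGp A) (τ' : CharGp B) (x : G) (y : G')
    (hxy : (x, y) ∈ P) (h1 : x ∈ A) (h2 : y ∈ B) :
    tchar hP τ τ' ⟨(x, y), hxy⟩ = τ ⟨x, h1⟩ * τ' ⟨y, h2⟩ := by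
  subst hP; rfl

lemma mem_prod_of_eq_prod {P : Subgroup (G × G')} {A : Subgroup G} {B : Subgroup G'}
    (hP : P = A.prod B) {x : G} {y : G'} (h : (x, y) ∈ P) : x ∈ A ∧ y ∈ B :=
  (le_of_eq hP) h

lemma tchar_rfl {A : Subgroup G} {B : Subgroup G'} (h : A.prod B = A.prod B)
    (τ : CharGp A) (τ' : CharGp B) : tchar h τ τ' = charTensor τ τ' := by
  ext p; rfl

lemma apply_one_eq_one {A : Subgroup G} (τ : CharGp A) (h : (1 : G) ∈ A) :
    τ ⟨1, h⟩ = 1 := by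
  have : (⟨1, h⟩ : A) = 1 := rfl
  rw [this, map_one]

lemma tchar_inj {P : Subgroup (G × G')} {A : Subgroup G} {B : Subgroup G'}
    (hP : P = A.prod B) {τ ρ : CharGp A} {τ' ρ' : CharGp B}
    (h : tchar hP τ τ' = tchar hP ρ ρ') : τ = ρ ∧ τ' = ρ' := by
  constructor
  · refine MonoidHom.ext fun a => ?_
    have hm : ((a : G), (1 : G')) ∈ P := by rw [hP]; exact ⟨a.2, B.one_mem⟩
    have h0 : τ ⟨(a : G), a.2⟩ * τ' ⟨1, B.one_mem⟩
        = ρ ⟨(a : G), a.2⟩ * ρ' ⟨1, B.one_mem⟩ := by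
      rw [← tchar_apply hP τ τ' _ _ hm a.2 B.one_mem,
        ← tchar_apply hP ρ ρ' _ _ hm a.2 B.one_mem, h]
    rw [apply_one_eq_one τ' _, apply_one_eq_one ρ' _, mul_one, mul_one] at h0
    exact h0
  · refine MonoidHom.ext fun b => ?_
    have hm : ((1 : G), (b : G')) ∈ P := by rw [hP]; exact ⟨A.one_mem, b.2⟩
    have h0 : τ ⟨1, A.one_mem⟩ * τ' ⟨(b : G'), b.2⟩
        = ρ ⟨1, A.one_mem⟩ * ρ' ⟨(b : G'), b.2⟩ := by
      rw [← tchar_apply hP τ τ' _ _ hm A.one_mem b.2,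
        ← tchar_apply hP ρ ρ' _ _ hm A.one_mem b.2, h]
    rw [apply_one_eq_one τ _, apply_one_eq_one ρ _, one_mul, one_mul] at h0
    exact h0

lemma tchar_surj {P : Subgroup (G × G')} {A : Subgroup G} {B : Subgroup G'}
    (hP : P = A.prod B) (χ : CharGp P) :
    ∃ (τ : CharGp A) (τ' : CharGp B), χ = tchar hP τ τ' := by
  have hmA : ∀ a : A, ((a : G), (1 : G')) ∈ P := fun a => by
    rw [hP]; exact ⟨a.2, B.one_mem⟩
  have hmB : ∀ b : B, ((1 : G), (b : G')) ∈ P := fun b => by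
    rw [hP]; exact ⟨A.one_mem, b.2⟩
  refine ⟨χ.comp ⟨⟨fun a => ⟨((a : G), 1), hmA a⟩, by ext <;> simp⟩,
      fun a b => by ext <;> simp⟩,
    χ.comp ⟨⟨fun b => ⟨(1, (b : G')), hmB b⟩, by ext <;> simp⟩,
      fun a b => by ext <;> simp⟩, ?_⟩
  refine MonoidHom.ext fun p => ?_
  rcases p with ⟨⟨x, y⟩, hp⟩
  obtain ⟨h1, h2⟩ := mem_prod_of_eq_prod hP hp
  rw [tchar_apply hP _ _ x y hp h1 h2]
  simp only [MonoidHom.comp_apply, MonoidHom.coe_mk, OneHom.coe_mk]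
  rw [← map_mul]
  congr 1
  ext <;> simp

lemma tchar_conj {P : Subgroup (G × G')} {A : Subgroup G} {B : Subgroup G'}
    (hP : P = A.prod B) (τ : CharGp A) (τ' : CharGp B) :
    charConj (tchar hP τ τ') = tchar hP (charConj τ) (charConj τ') := by
  refine MonoidHom.ext fun p => ?_
  rcases p with ⟨⟨x, y⟩, hp⟩
  obtain ⟨h1, h2⟩ := mem_prod_of_eq_prod hP hp
  rw [charConj_apply, tchar_apply hP _ _ x y hp h1 h2, tchar_apply hP _ _ x y hp h1 h2,
    map_mul]
  rfl

lemma tchar_one {P : Subgroup (G × G')} {A : Subgroup G} {B : Subgroup G'}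
    (hP : P = A.prod B) : tchar hP (1 : CharGp A) (1 : CharGp B) = 1 := by
  refine MonoidHom.ext fun p => ?_
  rcases p with ⟨⟨x, y⟩, hp⟩
  obtain ⟨h1, h2⟩ := mem_prod_of_eq_prod hP hp
  rw [tchar_apply hP _ _ x y hp h1 h2]
  simp

lemma tchar_res {P Q : Subgroup (G × G')} {A C : Subgroup G} {B D : Subgroup G'}
    (hPQ : P ≤ Q) (hP : P = A.prod B) (hQ : Q = C.prod D) (hAC : A ≤ C) (hBD : B ≤ D)
    (σ : CharGp C) (σ' : CharGp D) :
    resChar hPQ (tchar hQ σ σ') = tchar hP (resChar hAC σ) (resChar hBD σ') := by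
  refine MonoidHom.ext fun p => ?_
  rcases p with ⟨⟨x, y⟩, hp⟩
  obtain ⟨h1, h2⟩ := mem_prod_of_eq_prod hP hp
  have hq : (x, y) ∈ Q := hPQ hp
  show tchar hQ σ σ' ⟨(x, y), hq⟩ = _
  rw [tchar_apply hQ σ σ' x y hq (hAC h1) (hBD h2),
    tchar_apply hP _ _ x y hp h1 h2]
  rfl
end TChar

section TT
variable {G G' : Type*} [CommGroup G] [CommGroup G'] [Fintype G] [Fintype G']

/-- The tensor family `J ⊗ J'`. -/
def TT (J : ∀ K H : Subgroup G, K ≤ H → Set (CharGp K) → Set (CharGp H))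
    (J' : ∀ K H : Subgroup G', K ≤ H → Set (CharGp K) → Set (CharGp H)) :
    ∀ P Q : Subgroup (G × G'), P ≤ Q → Set (CharGp P) → Set (CharGp Q) :=
  fun P Q _ U =>
    {ξ | ∃ (K₁ H₁ : Subgroup G) (K₂ H₂ : Subgroup G') (hP : P = K₁.prod K₂)
      (hQ : Q = H₁.prod H₂) (h1 : K₁ ≤ H₁) (h2 : K₂ ≤ H₂)
      (τ : CharGp K₁) (τ' : CharGp K₂) (σ : CharGp H₁) (σ' : CharGp H₂),
      tchar hP τ τ' ∈ U ∧ σ ∈ J K₁ H₁ h1 {τ} ∧ σ' ∈ J' K₂ H₂ h2 {τ'} ∧ ξ = tchar hQ σ σ'}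

variable (hcop : Nat.Coprime (Nat.card G) (Nat.card G'))
variable {J : ∀ K H : Subgroup G, K ≤ H → Set (CharGp K) → Set (CharGp H)}
variable {J' : ∀ K H : Subgroup G', K ≤ H → Set (CharGp K) → Set (CharGp H)}
variable (hJ : IsSubInductor J) (hJ' : IsSubInductor J')

lemma conj_image_image {H : Type*} [Group H] (U : Set (CharGp H)) :
    charConj '' (charConj '' U) = U := by
  rw [Set.image_image]
  simp only [charConj_charConj, Set.image_id']

include hJ hJ' in
lemma TT_conj_subset {P Q : Subgroup (G × G')} (h : P ≤ Q) (U : Set (CharGp P)) :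
    TT J J' P Q h (charConj '' U) ⊆ charConj '' TT J J' P Q h U := by
  rintro ξ ⟨K₁, H₁, K₂, H₂, hP, hQ, h1, h2, τ, τ', σ, σ', hU, hσ, hσ', rfl⟩
  obtain ⟨χ, hχ, hχe⟩ := hU
  have hχ2 : tchar hP (charConj τ) (charConj τ') ∈ U := by
    rw [← tchar_conj]
    have : charConj (tchar hP τ τ') = χ := by rw [← hχe, charConj_charConj]
    rw [this]; exact hχ
  refine ⟨tchar hQ (charConj σ) (charConj σ'),
    ⟨K₁, H₁, K₂, H₂, hP, hQ, h1, h2, charConj τ, charConj τ', charConj σ, charConj σ',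
      hχ2, J_conj_mem hJ h1 hσ, J_conj_mem hJ' h2 hσ', rfl⟩, ?_⟩
  rw [← tchar_conj, charConj_charConj]

include hcop hJ hJ' in
theorem TT_isSubInductor : IsSubInductor (TT J J') := by
  constructor
  · -- conj_comm
    intro P Q h U
    refine subset_antisymm (TT_conj_subset hJ hJ' h U) ?_
    have h2 := TT_conj_subset hJ hJ' h (charConj '' U)
    rw [conj_image_image] at h2
    intro ξ hξ
    obtain ⟨η, hη, rfl⟩ := hξ
    have := h2 hη
    obtain ⟨ζ, hζ, rfl⟩ := this
    rwa [charConj_charConj]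
  · -- union_comm
    intro P Q h s
    ext ξ
    constructor
    · rintro ⟨K₁, H₁, K₂, H₂, hP, hQ, h1, h2, τ, τ', σ, σ', hU, hσ, hσ', rfl⟩
      obtain ⟨U, hUs, hmem⟩ := hU
      exact Set.mem_biUnion hUs
        ⟨K₁, H₁, K₂, H₂, hP, hQ, h1, h2, τ, τ', σ, σ', hmem, hσ, hσ', rfl⟩
    · intro hξ
      obtain ⟨U, hUs, hmem⟩ := Set.mem_iUnion₂.1 hξ
      obtain ⟨K₁, H₁, K₂, H₂, hP, hQ, h1, h2, τ, τ', σ, σ', hU, hσ, hσ', rfl⟩ := hmem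
      exact ⟨K₁, H₁, K₂, H₂, hP, hQ, h1, h2, τ, τ', σ, σ', ⟨U, hUs, hU⟩, hσ, hσ', rfl⟩
  · -- comp
    intro K L H h1 h2 U
    ext ξ
    constructor
    · rintro ⟨L₁, H₁, L₂, H₂, hL, hH, hl1, hl2, τ, τ', σ, σ', hTU, hσ, hσ', rfl⟩
      obtain ⟨K₁, L₁', K₂, L₂', hK, hL', hk1, hk2, ρ, ρ', τ₀, τ₀', hU, hτ₀, hτ₀', he⟩ := hTU
      subst hL
      obtain ⟨e1, e2⟩ := prod_inj hL'
      subst e1; subst e2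
      obtain ⟨rfl, rfl⟩ := tchar_inj hL' he
      exact ⟨K₁, H₁, K₂, H₂, hK, hH, hk1.trans hl1, hk2.trans hl2, ρ, ρ', σ, σ', hU,
        J_comp_mem hJ hk1 hl1 hτ₀ hσ, J_comp_mem hJ' hk2 hl2 hτ₀' hσ', rfl⟩
    · rintro ⟨K₁, H₁, K₂, H₂, hK, hH, h1', h2', ρ, ρ', σ, σ', hU, hσ, hσ', rfl⟩
      subst hK; subst hH
      obtain ⟨L₁, L₂, rfl⟩ := exists_decomp hcop L
      obtain ⟨hKL1, hKL2⟩ := prod_le_prod_iff.1 h1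
      obtain ⟨hLH1, hLH2⟩ := prod_le_prod_iff.1 h2
      obtain ⟨τ, hτ, hστ⟩ := J_comp_exists hJ hKL1 hLH1 hσ
      obtain ⟨τ', hτ', hστ'⟩ := J_comp_exists hJ' hKL2 hLH2 hσ'
      exact ⟨L₁, H₁, L₂, H₂, rfl, rfl, hLH1, hLH2, τ, τ', σ, σ',
        ⟨K₁, L₁, K₂, L₂, rfl, rfl, hKL1, hKL2, ρ, ρ', τ, τ', hU, hτ, hτ', rfl⟩,
        hστ, hστ', rfl⟩
  · -- res_cover
    intro K H h U
    ext χ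
    constructor
    · rintro ⟨ξ, hξ, rfl⟩
      obtain ⟨K₁, H₁, K₂, H₂, hK, hH, h1, h2, τ, τ', σ, σ', hU, hσ, hσ', rfl⟩ := hξ
      rw [tchar_res h hK hH h1 h2 σ σ', J_res hJ h1 hσ, J_res hJ' h2 hσ']
      exact hU
    · intro hχU
      obtain ⟨K₁, K₂, rfl⟩ := exists_decomp hcop K
      obtain ⟨H₁, H₂, rfl⟩ := exists_decomp hcop H
      obtain ⟨h1, h2⟩ := prod_le_prod_iff.1 h
      obtain ⟨τ, τ', rfl⟩ := tchar_surj rfl χ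
      obtain ⟨σ, hσ⟩ := J_nonempty hJ h1 τ
      obtain ⟨σ', hσ'⟩ := J_nonempty hJ' h2 τ'
      refine ⟨tchar rfl σ σ',
        ⟨K₁, H₁, K₂, H₂, rfl, rfl, h1, h2, τ, τ', σ, σ', hχU, hσ, hσ', rfl⟩, ?_⟩
      rw [tchar_res h rfl rfl h1 h2 σ σ', J_res hJ h1 hσ, J_res hJ' h2 hσ']
  · -- res_le
    intro K L H hK hL U
    rintro χ ⟨ξ, hξ, rfl⟩
    obtain ⟨L₁, H₁, L₂, H₂, hLd, hHd, h1, h2, τ, τ', σ, σ', hU, hσ, hσ', rfl⟩ := hξ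
    subst hLd; subst hHd
    obtain ⟨K₁, K₂, rfl⟩ := exists_decomp hcop K
    obtain ⟨hK1, hK2⟩ := prod_le_prod_iff.1 hK
    have hPinf : (K₁.prod K₂) ⊓ (L₁.prod L₂) = (K₁ ⊓ L₁).prod (K₂ ⊓ L₂) :=
      prod_inf_prod K₁ L₁ K₂ L₂
    refine ⟨K₁ ⊓ L₁, K₁, K₂ ⊓ L₂, K₂, hPinf, rfl, inf_le_left, inf_le_left,
      resChar inf_le_right τ, resChar inf_le_right τ',
      resChar hK1 σ, resChar hK2 σ', ?_, ?_, ?_, ?_⟩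
    · exact ⟨tchar rfl τ τ', hU,
        tchar_res inf_le_right hPinf rfl inf_le_right inf_le_right τ τ'⟩
    · have := hJ.res_le hK1 h1 ({τ} : Set (CharGp L₁)) ⟨σ, hσ, rfl⟩
      rwa [Set.image_singleton] at this
    · have := hJ'.res_le hK2 h2 ({τ'} : Set (CharGp L₂)) ⟨σ', hσ', rfl⟩
      rwa [Set.image_singleton] at this
    · exact tchar_res hK rfl rfl hK1 hK2 σ σ'
  · -- one_mem
    intro K H h
    obtain ⟨K₁, K₂, rfl⟩ := exists_decomp hcop K
    obtain ⟨H₁, H₂, rfl⟩ := exists_decomp hcop H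
    obtain ⟨h1, h2⟩ := prod_le_prod_iff.1 h
    refine ⟨K₁, H₁, K₂, H₂, rfl, rfl, h1, h2, 1, 1, 1, 1, ?_, hJ.one_mem h1,
      hJ'.one_mem h2, (tchar_one rfl).symm⟩
    rw [tchar_one rfl]
    rfl
end TT

section Final
variable {G G' : Type*} [CommGroup G] [CommGroup G'] [Fintype G] [Fintype G']
variable {J : ∀ K H : Subgroup G, K ≤ H → Set (CharGp K) → Set (CharGp H)}
variable {J' : ∀ K H : Subgroup G', K ≤ H → Set (CharGp K) → Set (CharGp H)}

theorem TT_spec (K H : Subgroup G) (K' H' : Subgroup G') (hK : K ≤ H) (hK' : K' ≤ H')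
    (hP : K.prod K' ≤ H.prod H') (U : Set (CharGp (K.prod K'))) :
    TT J J' (K.prod K') (H.prod H') hP U =
      {ξ | ∃ (τ : CharGp K) (τ' : CharGp K') (σ : CharGp H) (σ' : CharGp H'),
        charTensor τ τ' ∈ U ∧ σ ∈ J K H hK {τ} ∧ σ' ∈ J' K' H' hK' {τ'} ∧
        ξ = charTensor σ σ'} := by
  ext ξ
  constructor
  · rintro ⟨A, C, B, D, hP', hQ', h1, h2, τ, τ', σ, σ', hU, hσ, hσ', rfl⟩
    obtain ⟨e1, e2⟩ := prod_inj hP'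
    subst e1; subst e2
    obtain ⟨e3, e4⟩ := prod_inj hQ'
    subst e3; subst e4
    rw [tchar_rfl hP' τ τ'] at hU
    exact ⟨τ, τ', σ, σ', hU, hσ, hσ', tchar_rfl hQ' σ σ'⟩
  · rintro ⟨τ, τ', σ, σ', hU, hσ, hσ', rfl⟩
    refine ⟨K, H, K', H', rfl, rfl, hK, hK', τ, τ', σ, σ', ?_, hσ, hσ', ?_⟩
    · rw [tchar_rfl]; exact hU
    · rw [tchar_rfl]

variable (hcop : Nat.Coprime (Nat.card G) (Nat.card G'))
variable (hJ : IsSubInductor J) (hJ' : IsSubInductor J')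

include hcop hJ hJ' in
theorem TT_resJ (H : Subgroup G) (H' : Subgroup G') :
    resJ (TT J J') (H.prod H') =
      {ξ | ∃ (σ : CharGp H) (σ' : CharGp H'), σ ∈ resJ J H ∧ ξ = charTensor σ σ'} ∪
      {ξ | ∃ (σ : CharGp H) (σ' : CharGp H'), σ' ∈ resJ J' H' ∧ ξ = charTensor σ σ'} := by
  ext ξ
  constructor
  · intro hξ
    obtain ⟨P, hmem⟩ := Set.mem_iUnion.1 hξ
    obtain ⟨hlt, hmem⟩ := Set.mem_iUnion.1 hmem
    obtain ⟨A, H₁, B, H₂, hPd, hQd, h1, h2, τ, τ', σ, σ', -, hσ, hσ', rfl⟩ := hmem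
    obtain ⟨e1, e2⟩ := prod_inj hQd
    subst e1; subst e2
    subst hPd
    rcases lt_or_eq_of_le h1 with hAH | rfl
    · left
      refine ⟨σ, σ', ?_, tchar_rfl hQd σ σ'⟩
      exact Set.mem_iUnion.2 ⟨A, Set.mem_iUnion.2 ⟨hAH,
        J_mono hJ h1 (Set.subset_univ _) hσ⟩⟩
    · rcases lt_or_eq_of_le h2 with hBH | rfl
      · right
        refine ⟨σ, σ', ?_, tchar_rfl hQd σ σ'⟩
        exact Set.mem_iUnion.2 ⟨B, Set.mem_iUnion.2 ⟨hBH,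
          J_mono hJ' h2 (Set.subset_univ _) hσ'⟩⟩
      · exact absurd rfl hlt.ne
  · rintro (⟨σ, σ', hσ, rfl⟩ | ⟨σ, σ', hσ', rfl⟩)
    · obtain ⟨A, hmem⟩ := Set.mem_iUnion.1 hσ
      obtain ⟨hlt, hσ⟩ := Set.mem_iUnion.1 hmem
      obtain ⟨τ, -, hστ⟩ := J_mem_singleton hJ hlt.le hσ
      refine Set.mem_iUnion.2 ⟨A.prod H', Set.mem_iUnion.2 ⟨prod_lt_prod_left H' hlt,
        ⟨A, H, H', H', rfl, rfl, hlt.le, le_rfl, τ, σ', σ, σ', Set.mem_univ _, hστ, ?_,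
          (tchar_rfl rfl σ σ').symm⟩⟩⟩
      rw [J_self hJ' le_rfl]
      rfl
    · obtain ⟨B, hmem⟩ := Set.mem_iUnion.1 hσ'
      obtain ⟨hlt, hσ'⟩ := Set.mem_iUnion.1 hmem
      obtain ⟨τ', -, hστ'⟩ := J_mem_singleton hJ' hlt.le hσ'
      refine Set.mem_iUnion.2 ⟨H.prod B, Set.mem_iUnion.2 ⟨prod_lt_prod_right H hlt,
        ⟨H, H, B, H', rfl, rfl, le_rfl, hlt.le, σ, τ', σ, σ', Set.mem_univ _, ?_, hστ',
          (tchar_rfl rfl σ σ').symm⟩⟩⟩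
      rw [J_self hJ le_rfl]
      rfl
end Final


/-- **Proposition.** If `gcd(|G|,|G'|) = 1` and `J`, `J'` are sub-inductors on `G`
and `G'`, then `J ⊗ J'` (defined on subgroups `K×K' ≤ H×H'` of `G × G'` by
`(J⊗J')({τ⊗τ'}) = J({τ}) ⊗ J'({τ'})` on singletons, extended by unions) is a
sub-inductor on `G × G'`, and its residue satisfies
`Res_{J⊗J'}(H×H') = (Res_J(H) ⊗ Ĥ') ∪ (Ĥ ⊗ Res_{J'}(H'))`. -/
theorem tensor_subinductor (G G' : Type*) [CommGroup G] [Fintype G]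
    [CommGroup G'] [Fintype G']
    (hcop : Nat.Coprime (Nat.card G) (Nat.card G'))
    (J : ∀ K H : Subgroup G, K ≤ H → Set (CharGp K) → Set (CharGp H))
    (hJ : IsSubInductor J)
    (J' : ∀ K H : Subgroup G', K ≤ H → Set (CharGp K) → Set (CharGp H))
    (hJ' : IsSubInductor J') :
    ∃ T : ∀ K H : Subgroup (G × G'), K ≤ H → Set (CharGp K) → Set (CharGp H),
      IsSubInductor T ∧
      (∀ (K H : Subgroup G) (K' H' : Subgroup G') (hK : K ≤ H) (hK' : K' ≤ H')
        (hP : K.prod K' ≤ H.prod H') (U : Set (CharGp (K.prod K'))),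
        T (K.prod K') (H.prod H') hP U =
          {ξ | ∃ (τ : CharGp K) (τ' : CharGp K') (σ : CharGp H) (σ' : CharGp H'),
            charTensor τ τ' ∈ U ∧ σ ∈ J K H hK {τ} ∧ σ' ∈ J' K' H' hK' {τ'} ∧
            ξ = charTensor σ σ'}) ∧
      (∀ (H : Subgroup G) (H' : Subgroup G'),
        resJ T (H.prod H') =
          {ξ | ∃ (σ : CharGp H) (σ' : CharGp H'), σ ∈ resJ J H ∧ ξ = charTensor σ σ'} ∪
          {ξ | ∃ (σ : CharGp H) (σ' : CharGp H'), σ' ∈ resJ J' H' ∧ ξ = charTensor σ σ'}) :=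
  ⟨TT J J', TT_isSubInductor hcop hJ hJ',
    fun K H K' H' hK hK' hP U => TT_spec K H K' H' hK hK' hP U,
    fun H H' => TT_resJ hcop hJ hJ' H H'⟩
end
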